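/- For every θ ∈ Θ, every j ∈ {1,…,d} and every x ∈ ℝ^p, the pointwise identity A_θ(∇_x ∂_{θ_j} log q_θ)(x) = ∂_{θ_j} H(x, θ) holds, where H(x, θ) := (1/2)‖∇_x log q_θ(x)‖² + Δ_x log q_θ(x) is the Hyvärinen score and Δ_x = div ∘ ∇_x is the Laplacian. Consequently, the estimating equations of Stein's method of moments with test functions f_{θ,j} = ∇_x ∂_{θ_j} log q_θ coincide with the estimating equations (1/n) Σ_i ∂_{θ_j} H(X_i, θ) = 0 of score matching. -/

import Mathlib

open MeasureTheory Real Filter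

/-- Partial derivative in the `i`-th coordinate. -/
noncomputable def pdv {n : ℕ} (i : Fin n) (f : (Fin n → ℝ) → ℝ) (x : Fin n → ℝ) : ℝ :=
  deriv (fun t => f (Function.update x i t)) (x i)

/-- Gradient of a scalar function on ℝ^n. -/
noncomputable def gradv {n : ℕ} (f : (Fin n → ℝ) → ℝ) (x : Fin n → ℝ) : Fin n → ℝ :=
  fun i => pdv i f x

/-- Divergence of a vector field on ℝ^n. -/
noncomputable def divv {n : ℕ} (f : (Fin n → ℝ) → (Fin n → ℝ)) (x : Fin n → ℝ) : ℝ :=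
  ∑ i, pdv i (fun y => f y i) x

/-- Divergence-based Stein operator `A_q f = div(q f) / q`. -/
noncomputable def stein {n : ℕ} (q : (Fin n → ℝ) → ℝ) (f : (Fin n → ℝ) → (Fin n → ℝ))
    (x : Fin n → ℝ) : ℝ :=
  divv (fun y i => q y * f y i) x / q x

/-- Gradient (in x) of the `j`-th Fisher score function `∂_{θ_j} log q_θ`. -/
noncomputable def scoreGrad {d p : ℕ} (q : (Fin d → ℝ) → (Fin p → ℝ) → ℝ)
    (θ : Fin d → ℝ) (j : Fin d) (x : Fin p → ℝ) : Fin p → ℝ :=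
  gradv (fun z => pdv j (fun θ' => Real.log (q θ' z)) θ) x

/-- Hyvärinen score `H(x,θ) = ‖∇ₓ log q_θ(x)‖²/2 + Δₓ log q_θ(x)`. -/
noncomputable def hyv {d p : ℕ} (q : (Fin d → ℝ) → (Fin p → ℝ) → ℝ)
    (θ : Fin d → ℝ) (x : Fin p → ℝ) : ℝ :=
  (1 / 2) * ∑ i, (gradv (fun y => Real.log (q θ y)) x i) ^ 2
    + divv (fun y => gradv (fun z => Real.log (q θ z)) y) x

lemma update_eq {n : ℕ} (x : Fin n → ℝ) (i : Fin n) (t : ℝ) :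
    Function.update x i t = x + (t - x i) • (Pi.single i 1 : Fin n → ℝ) := by
  funext k
  by_cases h : k = i
  · subst h; simp
  · simp [Function.update_of_ne h, Pi.single_eq_of_ne h]

lemma pdv_eq_fderiv {n : ℕ} (i : Fin n) {f : (Fin n → ℝ) → ℝ} {x : Fin n → ℝ}
    (hf : DifferentiableAt ℝ f x) :
    pdv i f x = fderiv ℝ f x (Pi.single i 1) := by
  set e : Fin n → ℝ := Pi.single i 1 with he
  have h1 : HasDerivAt (fun t : ℝ => x + (t - x i) • e) e (x i) := by
    simpa using (((hasDerivAt_id (x i)).sub_const (x i)).smul_const e).const_add x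
  have hfx : HasFDerivAt f (fderiv ℝ f x) (x + ((x i) - x i) • e) := by
    simpa using hf.hasFDerivAt
  have h2 : HasDerivAt (fun t : ℝ => f (x + (t - x i) • e))
      (fderiv ℝ f x e) (x i) := hfx.comp_hasDerivAt (x i) h1
  unfold pdv
  rw [show (fun t => f (Function.update x i t))
      = fun t : ℝ => f (x + (t - x i) • e) from
    funext fun t => by rw [update_eq]]
  exact h2.deriv

section QQ
variable {d p : ℕ}

lemma pdv_snd (φ : ((Fin d → ℝ) × (Fin p → ℝ)) → ℝ) (θ : Fin d → ℝ) (x : Fin p → ℝ)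
    (hφ : DifferentiableAt ℝ φ (θ, x)) (i : Fin p) :
    pdv i (fun z => φ (θ, z)) x = fderiv ℝ φ (θ, x) (0, Pi.single i 1) := by
  have hinner : HasFDerivAt (fun z : Fin p → ℝ => ((θ, z) : (Fin d → ℝ) × (Fin p → ℝ)))
      (((0 : (Fin p → ℝ) →L[ℝ] (Fin d → ℝ))).prod (ContinuousLinearMap.id ℝ _)) x :=
    (hasFDerivAt_const θ x).prodMk (hasFDerivAt_id x)
  have hc : HasFDerivAt (fun z => φ (θ, z))
      ((fderiv ℝ φ (θ, x)).comp ((0 : (Fin p → ℝ) →L[ℝ] (Fin d → ℝ)).prod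
        (ContinuousLinearMap.id ℝ _))) x := hφ.hasFDerivAt.comp x hinner
  rw [pdv_eq_fderiv i hc.differentiableAt, hc.fderiv]
  simp

lemma pdv_fst (φ : ((Fin d → ℝ) × (Fin p → ℝ)) → ℝ) (θ : Fin d → ℝ) (x : Fin p → ℝ)
    (hφ : DifferentiableAt ℝ φ (θ, x)) (j : Fin d) :
    pdv j (fun θ' => φ (θ', x)) θ = fderiv ℝ φ (θ, x) (Pi.single j 1, 0) := by
  have hinner : HasFDerivAt (fun θ' : Fin d → ℝ => ((θ', x) : (Fin d → ℝ) × (Fin p → ℝ)))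
      ((ContinuousLinearMap.id ℝ _).prod (0 : (Fin d → ℝ) →L[ℝ] (Fin p → ℝ))) θ :=
    (hasFDerivAt_id θ).prodMk (hasFDerivAt_const x θ)
  have hc : HasFDerivAt (fun θ' => φ (θ', x))
      ((fderiv ℝ φ (θ, x)).comp ((ContinuousLinearMap.id ℝ _).prod
        (0 : (Fin d → ℝ) →L[ℝ] (Fin p → ℝ)))) θ := hφ.hasFDerivAt.comp θ hinner
  rw [pdv_eq_fderiv j hc.differentiableAt, hc.fderiv]
  simp

end QQ

lemma fderiv_apply_const {E U W : Type*} [NormedAddCommGroup E] [NormedSpace ℝ E]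
    [NormedAddCommGroup U] [NormedSpace ℝ U] [NormedAddCommGroup W] [NormedSpace ℝ W]
    {G : E → (W →L[ℝ] U)} {y : E} (hG : DifferentiableAt ℝ G y) (v : W) (a : E) :
    fderiv ℝ (fun y => G y v) y a = fderiv ℝ G y a v := by
  have hev := (ContinuousLinearMap.apply ℝ U v).hasFDerivAt (x := G y)
  have hc : HasFDerivAt (fun y => G y v)
      ((ContinuousLinearMap.apply ℝ U v).comp (fderiv ℝ G y)) y :=
    hev.comp y hG.hasFDerivAt
  rw [hc.fderiv]; rfl

section Deriv3
variable {E : Type*} [NormedAddCommGroup E] [NormedSpace ℝ E] {F : E → ℝ}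

lemma hA_smooth (hF : ContDiff ℝ (⊤ : ℕ∞) F) : ContDiff ℝ (⊤ : ℕ∞) (fderiv ℝ F) :=
  hF.fderiv_right (by simp)

lemma hB_smooth (hF : ContDiff ℝ (⊤ : ℕ∞) F) : ContDiff ℝ (⊤ : ℕ∞) (fderiv ℝ (fderiv ℝ F)) :=
  (hA_smooth hF).fderiv_right (by simp)

lemma B_apply (hF : ContDiff ℝ (⊤ : ℕ∞) F) (y : E) (v a : E) :
    fderiv ℝ (fun y => fderiv ℝ F y v) y a = fderiv ℝ (fderiv ℝ F) y a v :=
  fderiv_apply_const ((hA_smooth hF).differentiable (by simp) y) v a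

lemma T_apply (hF : ContDiff ℝ (⊤ : ℕ∞) F) (y : E) (a b c : E) :
    fderiv ℝ (fun y => fderiv ℝ (fderiv ℝ F) y b c) y a
      = fderiv ℝ (fderiv ℝ (fderiv ℝ F)) y a b c := by
  have hBd : DifferentiableAt ℝ (fderiv ℝ (fderiv ℝ F)) y :=
    ((hB_smooth hF).differentiable (by simp) y)
  have hG1 : DifferentiableAt ℝ (fun y => fderiv ℝ (fderiv ℝ F) y b) y := by
    exact ((ContinuousLinearMap.apply ℝ (E →L[ℝ] ℝ) b).differentiable.comp
      ((hB_smooth hF).differentiable (by simp))) y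
  rw [fderiv_apply_const hG1 c a]
  rw [fderiv_apply_const hBd b a]

lemma symB (hF : ContDiff ℝ (⊤ : ℕ∞) F) (y : E) (v w : E) :
    fderiv ℝ (fderiv ℝ F) y v w = fderiv ℝ (fderiv ℝ F) y w v := by
  refine second_derivative_symmetric (f := F) (f' := fderiv ℝ F)
    (fun z => ((hF.differentiable (by simp)) z).hasFDerivAt)
    (((hA_smooth hF).differentiable (by simp) y).hasFDerivAt) v w

lemma symT12 (hF : ContDiff ℝ (⊤ : ℕ∞) F) (y : E) (a b c : E) :
    fderiv ℝ (fderiv ℝ (fderiv ℝ F)) y a b c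
      = fderiv ℝ (fderiv ℝ (fderiv ℝ F)) y b a c := by
  set ec : (E →L[ℝ] ℝ) →L[ℝ] ℝ := ContinuousLinearMap.apply ℝ ℝ c with hec
  have hf : ∀ z : E, HasFDerivAt (fun y => fderiv ℝ F y c)
      (ec.comp (fderiv ℝ (fderiv ℝ F) z)) z := fun z =>
    ec.hasFDerivAt.comp z ((hA_smooth hF).differentiable (by simp) z).hasFDerivAt
  have hx : HasFDerivAt (fun z => ec.comp (fderiv ℝ (fderiv ℝ F) z))
      (((ContinuousLinearMap.compL ℝ E (E →L[ℝ] ℝ) ℝ) ec).comp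
        (fderiv ℝ (fderiv ℝ (fderiv ℝ F)) y)) y := by
    have h := (((ContinuousLinearMap.compL ℝ E (E →L[ℝ] ℝ) ℝ) ec).hasFDerivAt
      (x := fderiv ℝ (fderiv ℝ F) y)).comp y
      ((hB_smooth hF).differentiable (by simp) y).hasFDerivAt
    exact h
  have := second_derivative_symmetric (f := fun y => fderiv ℝ F y c) hf hx a b
  simpa [hec] using this

lemma symT23 (hF : ContDiff ℝ (⊤ : ℕ∞) F) (y : E) (a b c : E) :
    fderiv ℝ (fderiv ℝ (fderiv ℝ F)) y a b c
      = fderiv ℝ (fderiv ℝ (fderiv ℝ F)) y a c b := by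
  rw [← T_apply hF y a b c, ← T_apply hF y a c b]
  have h : (fun z => fderiv ℝ (fderiv ℝ F) z b c)
      = (fun z => fderiv ℝ (fderiv ℝ F) z c b) := funext fun z => symB hF z b c
  rw [h]

end Deriv3

section Diffs
variable {E : Type*} [NormedAddCommGroup E] [NormedSpace ℝ E] {F : E → ℝ}

lemma diffAv (hF : ContDiff ℝ (⊤ : ℕ∞) F) (v : E) :
    Differentiable ℝ (fun y => fderiv ℝ F y v) :=
  ((hA_smooth hF).clm_apply contDiff_const).differentiable (by simp)

lemma diffBvw (hF : ContDiff ℝ (⊤ : ℕ∞) F) (v w' : E) :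
    Differentiable ℝ (fun y => fderiv ℝ (fderiv ℝ F) y v w') :=
  (((hB_smooth hF).clm_apply contDiff_const).clm_apply contDiff_const).differentiable (by simp)

end Diffs

lemma main_eq {d p : ℕ} (q : (Fin d → ℝ) → (Fin p → ℝ) → ℝ)
    (hpos : ∀ θ x, 0 < q θ x)
    (F : ((Fin d → ℝ) × (Fin p → ℝ)) → ℝ)
    (hFq : ∀ θ' z, F (θ', z) = Real.log (q θ' z))
    (hF : ContDiff ℝ (⊤ : ℕ∞) F)
    (θ : Fin d → ℝ) (j : Fin d) (x : Fin p → ℝ) :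
    stein (q θ) (scoreGrad q θ j) x = pdv j (fun θ' => hyv q θ' x) θ := by
  have hFd : Differentiable ℝ F := hF.differentiable (by simp)
  set u : (Fin d → ℝ) × (Fin p → ℝ) := (Pi.single j 1, 0) with hu
  set w : Fin p → ((Fin d → ℝ) × (Fin p → ℝ)) := fun i => (0, Pi.single i 1) with hw
  set A := fderiv ℝ F with hA
  set B := fderiv ℝ A with hB
  set T := fderiv ℝ B with hT
  -- the score gradient as a second mixed derivative
  have hscore : ∀ (z : Fin p → ℝ) (i : Fin p),
      scoreGrad q θ j z i = B (θ, z) (w i) u := by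
    intro z i
    show pdv i (fun z' => pdv j (fun θ' => Real.log (q θ' z')) θ) z = _
    have hinner : (fun z' : Fin p → ℝ => pdv j (fun θ' => Real.log (q θ' z')) θ)
        = fun z' => A (θ, z') u := by
      funext z'
      have h1 : (fun θ' => Real.log (q θ' z')) = fun θ' => F (θ', z') :=
        funext fun θ' => (hFq θ' z').symm
      rw [h1, pdv_fst F θ z' (hFd (θ, z')) j, hu, hA]
    rw [hinner, pdv_snd (fun y => A y u) θ z (diffAv hF u (θ, z)) i]
    rw [hA, B_apply hF (θ, z) u (0, Pi.single i 1), hw]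
  -- the Stein operator value
  have hLHS : stein (q θ) (scoreGrad q θ j) x
      = ∑ i, (T (θ, x) (w i) (w i) u + A (θ, x) (w i) * B (θ, x) (w i) u) := by
    have hterm : ∀ i : Fin p, pdv i (fun z => q θ z * scoreGrad q θ j z i) x
        = q θ x * (T (θ, x) (w i) (w i) u + A (θ, x) (w i) * B (θ, x) (w i) u) := by
      intro i
      have hfun : (fun z => q θ z * scoreGrad q θ j z i)
          = fun z => (fun y => Real.exp (F y) * B y (w i) u) (θ, z) := by
        funext z
        rw [hscore z i]
        show q θ z * _ = Real.exp (F (θ, z)) * _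
        rw [hFq θ z, Real.exp_log (hpos θ z)]
      rw [hfun]
      have hexp : HasFDerivAt (fun y => Real.exp (F y))
          (Real.exp (F (θ, x)) • A (θ, x)) (θ, x) := (hFd (θ, x)).hasFDerivAt.exp
      have hBdv : Differentiable ℝ (fun y => B y (w i) u) := by
        rw [hB, hA]; exact diffBvw hF (w i) u
      have hφd : DifferentiableAt ℝ (fun y => Real.exp (F y) * B y (w i) u) (θ, x) :=
        (hexp.differentiableAt.mul (hBdv (θ, x)))
      rw [pdv_snd _ θ x hφd i]
      rw [fderiv_fun_mul hexp.differentiableAt (hBdv (θ, x))]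
      rw [show ((0 : Fin d → ℝ), (Pi.single i 1 : Fin p → ℝ)) = w i from by rw [hw]]
      simp only [ContinuousLinearMap.add_apply, ContinuousLinearMap.smul_apply, smul_eq_mul]
      have h1 : fderiv ℝ (fun y => B y (w i) u) (θ, x) (w i) = T (θ, x) (w i) (w i) u := by
        rw [hT, hB, hA]; exact T_apply hF (θ, x) (w i) (w i) u
      have h2 : fderiv ℝ (fun y => Real.exp (F y)) (θ, x) (w i)
          = Real.exp (F (θ, x)) * A (θ, x) (w i) := by
        rw [hexp.fderiv]; simp
      rw [h1, h2, hFq θ x, Real.exp_log (hpos θ x)]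
      ring
    show divv (fun y i => q θ y * scoreGrad q θ j y i) x / q θ x = _
    show (∑ i, pdv i (fun z => q θ z * scoreGrad q θ j z i) x) / q θ x = _
    rw [Finset.sum_congr rfl (fun i _ => hterm i)]
    rw [← Finset.mul_sum]
    exact mul_div_cancel_left₀ _ (ne_of_gt (hpos θ x))
  -- the Hyvärinen score rewritten
  have hhyv : ∀ θ' : Fin d → ℝ, hyv q θ' x
      = (1 / 2) * ∑ i, (A (θ', x) (w i) * A (θ', x) (w i))
        + ∑ i, B (θ', x) (w i) (w i) := by
    intro θ'
    have hlog : (fun y : Fin p → ℝ => Real.log (q θ' y)) = fun y => F (θ', y) :=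
      funext fun y => (hFq θ' y).symm
    have hg : ∀ (y : Fin p → ℝ) (i : Fin p),
        gradv (fun z => Real.log (q θ' z)) y i = A (θ', y) (w i) := by
      intro y i
      show pdv i (fun z => Real.log (q θ' z)) y = _
      rw [hlog, pdv_snd F θ' y (hFd _) i, hA,
        show ((0 : Fin d → ℝ), (Pi.single i 1 : Fin p → ℝ)) = w i from by rw [hw]]
    show (1 / 2) * ∑ i, (gradv (fun y => Real.log (q θ' y)) x i) ^ 2
        + divv (fun y => gradv (fun z => Real.log (q θ' z)) y) x = _
    have ht1 : ∑ i, (gradv (fun y => Real.log (q θ' y)) x i) ^ 2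
        = ∑ i, (A (θ', x) (w i) * A (θ', x) (w i)) :=
      Finset.sum_congr rfl fun i _ => by rw [hg x i, pow_two]
    have ht2 : divv (fun y => gradv (fun z => Real.log (q θ' z)) y) x
        = ∑ i, B (θ', x) (w i) (w i) := by
      show ∑ i, pdv i (fun y => gradv (fun z => Real.log (q θ' z)) y i) x = _
      refine Finset.sum_congr rfl fun i _ => ?_
      have hfun : (fun y => gradv (fun z => Real.log (q θ' z)) y i)
          = fun y => (fun y' => A y' (w i)) (θ', y) := funext fun y => hg y i
      rw [hfun, pdv_snd (fun y' => A y' (w i)) θ' x (by rw [hA]; exact diffAv hF (w i) (θ', x)) i]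
      rw [hA, B_apply hF (θ', x) (w i) (0, Pi.single i 1),
        show ((0 : Fin d → ℝ), (Pi.single i 1 : Fin p → ℝ)) = w i from by rw [hw]]
    rw [ht1, ht2]
  -- its θ-derivative
  have hRHS : pdv j (fun θ' => hyv q θ' x) θ
      = (1 / 2) * ∑ i, (A (θ, x) (w i) * B (θ, x) u (w i)
            + A (θ, x) (w i) * B (θ, x) u (w i))
        + ∑ i, T (θ, x) u (w i) (w i) := by
    have hAvi : ∀ i : Fin p, Differentiable ℝ (fun y => A y (w i)) := fun i => by
      rw [hA]; exact diffAv hF (w i)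
    have hBvi : ∀ i : Fin p, Differentiable ℝ (fun y => B y (w i) (w i)) := fun i => by
      rw [hB, hA]; exact diffBvw hF (w i) (w i)
    have hsum1 : Differentiable ℝ (fun y => ∑ i, A y (w i) * A y (w i)) :=
      Differentiable.fun_sum fun i _ => (hAvi i).mul (hAvi i)
    have hsum2 : Differentiable ℝ (fun y => ∑ i, B y (w i) (w i)) :=
      Differentiable.fun_sum fun i _ => hBvi i
    have hΦd : DifferentiableAt ℝ
        (fun y => (1 / 2 : ℝ) * ∑ i, A y (w i) * A y (w i) + ∑ i, B y (w i) (w i)) (θ, x) :=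
      ((hsum1.const_mul _).add hsum2) (θ, x)
    have hfun : (fun θ' => hyv q θ' x)
        = fun θ' => (fun y => (1 / 2 : ℝ) * ∑ i, A y (w i) * A y (w i)
            + ∑ i, B y (w i) (w i)) (θ', x) := funext fun θ' => hhyv θ'
    rw [hfun, pdv_fst _ θ x hΦd j,
      show ((Pi.single j 1 : Fin d → ℝ), (0 : Fin p → ℝ)) = u from by rw [hu]]
    rw [fderiv_fun_add ((hsum1.const_mul _) (θ, x)) (hsum2 (θ, x))]
    rw [fderiv_const_mul (hsum1 (θ, x)) ((1 : ℝ) / 2)]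
    rw [fderiv_fun_sum (A := fun i y => A y (w i) * A y (w i))
      fun i _ => ((hAvi i).mul (hAvi i)) (θ, x)]
    rw [fderiv_fun_sum fun i _ => (hBvi i) (θ, x)]
    simp only [ContinuousLinearMap.add_apply, ContinuousLinearMap.smul_apply,
      ContinuousLinearMap.coe_sum', Finset.sum_apply, smul_eq_mul]
    have hbu : ∀ i : Fin p, fderiv ℝ (fun y => A y (w i)) (θ, x) u = B (θ, x) u (w i) := by
      intro i; rw [hA, hB]; exact B_apply hF (θ, x) (w i) u
    have hS1 : ∀ i : Fin p, (fderiv ℝ (fun y => A y (w i) * A y (w i)) (θ, x)) u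
        = A (θ, x) (w i) * B (θ, x) u (w i) + A (θ, x) (w i) * B (θ, x) u (w i) := by
      intro i
      rw [fderiv_fun_mul ((hAvi i) (θ, x)) ((hAvi i) (θ, x))]
      simp only [ContinuousLinearMap.add_apply, ContinuousLinearMap.smul_apply, smul_eq_mul]
      rw [hbu i]
    have hS2 : ∀ i : Fin p, (fderiv ℝ (fun y => B y (w i) (w i)) (θ, x)) u
        = T (θ, x) u (w i) (w i) := by
      intro i; rw [hT, hB, hA]; exact T_apply hF (θ, x) u (w i) (w i)
    rw [Finset.sum_congr rfl (fun i _ => hS1 i), Finset.sum_congr rfl (fun i _ => hS2 i)]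
  rw [hLHS, hRHS]
  have e1 : ∀ i : Fin p, T (θ, x) (w i) (w i) u = T (θ, x) u (w i) (w i) := fun i => by
    rw [hT, hB, hA, symT23 hF (θ, x) (w i) (w i) u, symT12 hF (θ, x) (w i) u (w i)]
  have e2 : ∀ i : Fin p, B (θ, x) (w i) u = B (θ, x) u (w i) := fun i => by
    rw [hB, hA, symB hF (θ, x) (w i) u]
  rw [Finset.sum_congr rfl (fun i _ => by rw [e1 i, e2 i] :
    ∀ i ∈ Finset.univ, T (θ, x) (w i) (w i) u + A (θ, x) (w i) * B (θ, x) (w i) u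
      = T (θ, x) u (w i) (w i) + A (θ, x) (w i) * B (θ, x) u (w i))]
  rw [Finset.sum_add_distrib, Finset.sum_add_distrib]
  ring

/-- the Stein operator applied to `∇ₓ ∂_{θⱼ} log q_θ` equals `∂_{θⱼ} H(x,θ)`
pointwise; consequently the SMoM estimating equations with these test functions coincide with
the score matching estimating equations. -/
theorem stmt0 {d p : ℕ} (Θ : Set (Fin d → ℝ)) (hΘ : IsOpen Θ)
    (q : (Fin d → ℝ) → (Fin p → ℝ) → ℝ)
    (hpos : ∀ θ x, 0 < q θ x)
    (hsmooth : ContDiff ℝ (⊤ : ℕ∞) (fun pr : (Fin d → ℝ) × (Fin p → ℝ) => q pr.1 pr.2)) :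
    ∀ θ ∈ Θ, ∀ (j : Fin d) (x : Fin p → ℝ),
      stein (q θ) (scoreGrad q θ j) x = pdv j (fun θ' => hyv q θ' x) θ
      ∧ ∀ (n : ℕ) (X : Fin n → (Fin p → ℝ)),
          (1 / (n : ℝ)) * ∑ i, stein (q θ) (scoreGrad q θ j) (X i)
            = (1 / (n : ℝ)) * ∑ i, pdv j (fun θ' => hyv q θ' (X i)) θ := by
  intro θ hθ j x
  have hF : ContDiff ℝ (⊤ : ℕ∞) (fun pr : (Fin d → ℝ) × (Fin p → ℝ) => Real.log (q pr.1 pr.2)) :=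
    hsmooth.log fun pr => (hpos pr.1 pr.2).ne'
  have key : ∀ x' : Fin p → ℝ, stein (q θ) (scoreGrad q θ j) x'
      = pdv j (fun θ' => hyv q θ' x') θ := fun x' =>
    main_eq q hpos _ (fun _ _ => rfl) hF θ j x'
  exact ⟨key x, fun n X => by
    rw [Finset.sum_congr rfl fun i _ => key (X i)]⟩
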